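/- Let C be a category equipped with a cylinder (I, i₀, i₁, p), let i : B ⟶ A be a cofibration, and let f : B ⟶ X be any morphism. Suppose the pushout A ∪_B X of i along f exists, with structure maps ī : X ⟶ A ∪_B X and f̄ : A ⟶ A ∪_B X, and suppose that the functor I carries this pushout to a pushout, i.e., the square with maps I.map i, I.map f, I.map ī, I.map f̄ is again a pushout square (I.obj (A ∪_B X) is the pushout of I.map i along I.map f). Then ī : X ⟶ A ∪_B X is a cofibration. -/

import Mathlib

open CategoryTheory

universe v u

/-- A cylinder on a category `C`: an endofunctor `I` with natural transformations
`i₀ i₁ : 𝟭 C ⟶ I` and `p : I ⟶ 𝟭 C` such that `i_k ≫ p = 𝟙` objectwise. -/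
structure Cylinder (C : Type u) [Category.{v} C] where
  I : C ⥤ C
  i₀ : 𝟭 C ⟶ I
  i₁ : 𝟭 C ⟶ I
  p : I ⟶ 𝟭 C
  i₀_p : ∀ X : C, i₀.app X ≫ p.app X = 𝟙 X
  i₁_p : ∀ X : C, i₁.app X ≫ p.app X = 𝟙 X

/-- The `k`-th end inclusion of the cylinder, `k ∈ {0,1}`. -/
def Cylinder.ι {C : Type u} [Category.{v} C] (cyl : Cylinder C) (k : Fin 2) :
    𝟭 C ⟶ cyl.I :=
  if k = 0 then cyl.i₀ else cyl.i₁

/-- A morphism `i : B ⟶ A` is a cofibration for the cylinder `cyl` iff it satisfies the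
homotopy extension property: for each `k ∈ {0,1}`, every object `Y`, and all morphisms
`f : A ⟶ Y`, `G : I.obj B ⟶ Y` with `i ≫ f = i_k.app B ≫ G`, there is `H : I.obj A ⟶ Y`
with `i_k.app A ≫ H = f` and `I.map i ≫ H = G`. -/
def IsCofibration {C : Type u} [Category.{v} C] (cyl : Cylinder C)
    {B A : C} (i : B ⟶ A) : Prop :=
  ∀ (k : Fin 2) (Y : C) (f : A ⟶ Y) (G : cyl.I.obj B ⟶ Y),
    i ≫ f = (cyl.ι k).app B ≫ G →
    ∃ H : cyl.I.obj A ⟶ Y, (cyl.ι k).app A ≫ H = f ∧ cyl.I.map i ≫ H = G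

/-! Extend over `I A` with the homotopy extension property of `i`, applied to `fbar ≫ g` and
`I f ≫ G`; this extension and `G` then glue along the pushout `I P` of `I i` and `I f`. -/

theorem Cylinder.ι_app_naturality {C : Type u} [Category.{v} C] (cyl : Cylinder C) (k : Fin 2)
    {U V : C} (u : U ⟶ V) : u ≫ (cyl.ι k).app V = (cyl.ι k).app U ≫ cyl.I.map u :=
  (cyl.ι k).naturality u

/-- Pushout axiom: the pushout of a cofibration `i : B ⟶ A` along any morphism
`f : B ⟶ X` is again a cofibration, provided the cylinder functor `I` carries the
pushout square to a pushout square. -/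
theorem pushout_of_cofibration {C : Type u} [Category.{v} C] (cyl : Cylinder C)
    {B A X P : C} (i : B ⟶ A) (f : B ⟶ X) (fbar : A ⟶ P) (ibar : X ⟶ P)
    (hi : IsCofibration cyl i)
    (hpo : IsPushout i f fbar ibar)
    (hIpo : IsPushout (cyl.I.map i) (cyl.I.map f) (cyl.I.map fbar) (cyl.I.map ibar)) :
    IsCofibration cyl ibar := by
  intro k Y g G hcomm
  have hcompat : i ≫ fbar ≫ g = (cyl.ι k).app B ≫ cyl.I.map f ≫ G := by
    rw [← Category.assoc, hpo.w, Category.assoc, hcomm, ← Category.assoc,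
      cyl.ι_app_naturality, Category.assoc]
  obtain ⟨H₁, hH₁_end, hH₁_base⟩ := hi k Y (fbar ≫ g) (cyl.I.map f ≫ G) hcompat
  refine ⟨hIpo.desc H₁ G hH₁_base, hpo.hom_ext ?_ ?_, hIpo.inr_desc H₁ G hH₁_base⟩
  · rw [← Category.assoc, cyl.ι_app_naturality, Category.assoc, hIpo.inl_desc, hH₁_end]
  · rw [← Category.assoc, cyl.ι_app_naturality, Category.assoc, hIpo.inr_desc, hcomm]
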